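/- Let n ≥ 1 and 0 ≤ N ≤ n−1, and for 0 ≤ j ≤ N let V_j = (V_{j,1},…,V_{j,n−1}) be a vector of positive reals. Then there exist unique real vectors U_m = (U_{m,1},…,U_{m,n−m}) for 1 ≤ m ≤ N+1 such that F(V_N)···F(V_1)F(V_0) = F_{N+1}(U_{N+1})···F_2(U_2)F_1(U_1) as n×n real matrices; moreover all entries of all U_m are positive. -/
import Mathlib


/-- Extend a vector `V : Fin m → ℝ` to `ℕ → ℝ` by zero. -/
def padded {m : ℕ} (V : Fin m → ℝ) : ℕ → ℝ :=
  fun t => if h : t < m then V ⟨t, h⟩ else 0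

/-- The matrix E(I): diagonal entries I_i, entries 1 on the superdiagonal. -/
def Ematrix (n : ℕ) (I : Fin n → ℝ) : Matrix (Fin n) (Fin n) ℝ :=
  Matrix.of fun r c =>
    if (c : ℕ) = (r : ℕ) then I r else if (c : ℕ) = (r : ℕ) + 1 then 1 else 0

/-- The matrix F_k(V) (1-indexed description: F_k(V)_{ii} = 1,
F_k(V)_{i+1,i} = −V_{i−k+1} for k ≤ i ≤ n−1, other entries 0). -/
def Fkmatrix (n k : ℕ) (V : Fin (n - k) → ℝ) : Matrix (Fin n) (Fin n) ℝ :=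
  Matrix.of fun r c =>
    if (r : ℕ) = (c : ℕ) then 1
    else if (r : ℕ) = (c : ℕ) + 1 ∧ k ≤ (c : ℕ) + 1 then -(padded V ((c : ℕ) + 1 - k))
    else 0

/-- The product F(V_N) ⋯ F(V_1) F(V_0). -/
def prodF1 (n : ℕ) (V : ℕ → Fin (n - 1) → ℝ) : ℕ → Matrix (Fin n) (Fin n) ℝ
  | 0 => Fkmatrix n 1 (V 0)
  | (N+1) => Fkmatrix n 1 (V (N+1)) * prodF1 n V N

/-- The product F_{N+1}(U_{N+1}) ⋯ F_2(U_2) F_1(U_1), where `U m` stands for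
the vector U_{m+1} : Fin (n−(m+1)) → ℝ. -/
def prodFk (n : ℕ) (U : (m : ℕ) → Fin (n - (m+1)) → ℝ) : ℕ → Matrix (Fin n) (Fin n) ℝ
  | 0 => Fkmatrix n 1 (U 0)
  | (N+1) => Fkmatrix n (N+2) (U (N+1)) * prodFk n U N

-- helper defs
def Lmat (n : ℕ) (f : ℕ → ℝ) : Matrix (Fin n) (Fin n) ℝ :=
  Matrix.of fun r c =>
    if (r : ℕ) = (c : ℕ) then 1 else if (r : ℕ) = (c : ℕ) + 1 then f (c : ℕ) else 0

def fket (k : ℕ) (v : ℕ → ℝ) : ℕ → ℝ :=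
  fun c => if k ≤ c + 1 then -(v (c + 1 - k)) else 0

lemma padded_lt {m : ℕ} (V : Fin m → ℝ) (t : ℕ) (h : t < m) : padded V t = V ⟨t, h⟩ :=
  dif_pos h

lemma padded_ge {m : ℕ} (V : Fin m → ℝ) (t : ℕ) (h : ¬ t < m) : padded V t = 0 :=
  dif_neg h

lemma Fk_eq (n k : ℕ) (V : Fin (n - k) → ℝ) :
    Fkmatrix n k V = Lmat n (fket k (padded V)) := by
  ext r c
  simp only [Fkmatrix, Lmat, fket, Matrix.of_apply]
  split_ifs with h1 h2 h3 h4 h5 <;> first | rfl | omega | (exfalso; omega)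

lemma Lmul_zero (n : ℕ) (f : ℕ → ℝ) (B : Matrix (Fin n) (Fin n) ℝ) (r c : Fin n)
    (hr : (r : ℕ) = 0) : (Lmat n f * B) r c = B r c := by
  rw [Matrix.mul_apply]
  have key : ∀ t : Fin n, Lmat n f r t * B t c = if t = r then B r c else 0 := by
    intro t
    simp only [Lmat, Matrix.of_apply]
    by_cases h1 : t = r
    · subst h1; rw [if_pos rfl, if_pos rfl, one_mul]
    · have h1' : (r : ℕ) ≠ (t : ℕ) := fun h => h1 (Fin.ext h.symm)
      have h2' : (r : ℕ) ≠ (t : ℕ) + 1 := by omega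
      rw [if_neg h1', if_neg h2', if_neg h1, zero_mul]
  rw [Finset.sum_congr rfl (fun t _ => key t), Finset.sum_ite_eq' Finset.univ r]
  simp

lemma Lmul_succ (n : ℕ) (f : ℕ → ℝ) (B : Matrix (Fin n) (Fin n) ℝ) (r s c : Fin n)
    (hr : (r : ℕ) = (s : ℕ) + 1) :
    (Lmat n f * B) r c = f (s : ℕ) * B s c + B r c := by
  rw [Matrix.mul_apply]
  have key : ∀ t : Fin n, Lmat n f r t * B t c =
      (if t = s then f (s : ℕ) * B s c else 0) + (if t = r then B r c else 0) := by
    intro t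
    have hrs : r ≠ s := fun h => by rw [h] at hr; omega
    simp only [Lmat, Matrix.of_apply]
    by_cases h1 : t = r
    · subst h1
      rw [if_pos rfl, if_neg hrs, if_pos rfl, one_mul, zero_add]
    · have h1' : (r : ℕ) ≠ (t : ℕ) := fun h => h1 (Fin.ext h.symm)
      rw [if_neg h1', if_neg h1]
      by_cases h2 : t = s
      · subst h2
        rw [if_pos (by omega), if_pos rfl, add_zero]
      · have h2' : (r : ℕ) ≠ (t : ℕ) + 1 := by
          intro h; exact h2 (Fin.ext (by omega))
        rw [if_neg h2', if_neg h2, zero_mul, add_zero]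
  rw [Finset.sum_congr rfl (fun t _ => key t), Finset.sum_add_distrib,
    Finset.sum_ite_eq' Finset.univ s, Finset.sum_ite_eq' Finset.univ r]
  simp

lemma prodFk_zero_L (n : ℕ) (U : (m : ℕ) → Fin (n - (m+1)) → ℝ) :
    prodFk n U 0 = Lmat n (fket 1 (padded (U 0))) := by
  rw [prodFk, Fk_eq]

lemma prodFk_succ_L (n : ℕ) (U : (m : ℕ) → Fin (n - (m+1)) → ℝ) (N : ℕ) :
    prodFk n U (N+1) = Lmat n (fket (N+2) (padded (U (N+1)))) * prodFk n U N := by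
  rw [prodFk, Fk_eq]

lemma Lmat_apply (n : ℕ) (f : ℕ → ℝ) (r c : Fin n) :
    Lmat n f r c =
      if (r : ℕ) = (c : ℕ) then 1 else if (r : ℕ) = (c : ℕ) + 1 then f (c : ℕ) else 0 := rfl

lemma prodFk_lt (n : ℕ) (U : (m : ℕ) → Fin (n - (m+1)) → ℝ) :
    ∀ N (r c : Fin n), (r : ℕ) < (c : ℕ) → prodFk n U N r c = 0 := by
  intro N
  induction N with
  | zero =>
    intro r c h
    rw [prodFk_zero_L, Lmat_apply]
    rw [if_neg (by omega), if_neg (by omega)]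
  | succ N ih =>
    intro r c h
    rw [prodFk_succ_L]
    rcases Nat.eq_zero_or_pos (r : ℕ) with h0 | h0
    · rw [Lmul_zero n _ _ r c h0]; exact ih r c h
    · have hs : ((r : ℕ) - 1) < n := by omega
      rw [Lmul_succ n _ _ r ⟨(r : ℕ) - 1, hs⟩ c (by simp; omega)]
      rw [ih r c h, ih ⟨(r : ℕ) - 1, hs⟩ c (by simp; omega)]
      ring

lemma prodFk_diag (n : ℕ) (U : (m : ℕ) → Fin (n - (m+1)) → ℝ) :
    ∀ N (r c : Fin n), (r : ℕ) = (c : ℕ) → prodFk n U N r c = 1 := by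
  intro N
  induction N with
  | zero =>
    intro r c h
    rw [prodFk_zero_L, Lmat_apply, if_pos h]
  | succ N ih =>
    intro r c h
    rw [prodFk_succ_L]
    rcases Nat.eq_zero_or_pos (r : ℕ) with h0 | h0
    · rw [Lmul_zero n _ _ r c h0]; exact ih r c h
    · have hs : ((r : ℕ) - 1) < n := by omega
      rw [Lmul_succ n _ _ r ⟨(r : ℕ) - 1, hs⟩ c (by simp; omega)]
      rw [ih r c h, prodFk_lt n U N ⟨(r : ℕ) - 1, hs⟩ c (by simp; omega)]
      ring

lemma prodFk_gt (n : ℕ) (U : (m : ℕ) → Fin (n - (m+1)) → ℝ) :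
    ∀ N (r c : Fin n), (c : ℕ) + N + 1 < (r : ℕ) → prodFk n U N r c = 0 := by
  intro N
  induction N with
  | zero =>
    intro r c h
    rw [prodFk_zero_L, Lmat_apply]
    rw [if_neg (by omega), if_neg (by omega)]
  | succ N ih =>
    intro r c h
    rw [prodFk_succ_L]
    have h0 : 0 < (r : ℕ) := by omega
    have hs : ((r : ℕ) - 1) < n := by omega
    rw [Lmul_succ n _ _ r ⟨(r : ℕ) - 1, hs⟩ c (by simp; omega)]
    rw [ih r c (by omega), ih ⟨(r : ℕ) - 1, hs⟩ c (by simp; omega)]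
    ring

lemma prodFk_band (n : ℕ) (U : (m : ℕ) → Fin (n - (m+1)) → ℝ) :
    ∀ N (r c : Fin n), (r : ℕ) = (c : ℕ) + N + 1 →
      prodFk n U N r c = (-1 : ℝ) ^ (N + 1) * ∏ m ∈ Finset.range (N + 1), padded (U m) (c : ℕ) := by
  intro N
  induction N with
  | zero =>
    intro r c h
    rw [prodFk_zero_L, Lmat_apply]
    rw [if_neg (by omega), if_pos (by omega)]
    simp [fket]
  | succ N ih =>
    intro r c h
    rw [prodFk_succ_L]
    have hs : ((r : ℕ) - 1) < n := by omega
    rw [Lmul_succ n _ _ r ⟨(r : ℕ) - 1, hs⟩ c (by simp; omega)]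
    rw [prodFk_gt n U N r c (by omega), ih ⟨(r : ℕ) - 1, hs⟩ c (by simp; omega)]
    have hf : fket (N+2) (padded (U (N+1))) ((⟨(r : ℕ) - 1, hs⟩ : Fin n) : ℕ) =
        -(padded (U (N+1)) (c : ℕ)) := by
      simp only [fket]
      rw [if_pos (by simp; omega)]
      congr 1
      congr 1
      simp; omega
    rw [hf]
    have hpr : ∏ m ∈ Finset.range (N+1+1), padded (U m) (c : ℕ) =
        (∏ m ∈ Finset.range (N+1), padded (U m) (c : ℕ)) * padded (U (N+1)) (c : ℕ) :=
      Finset.prod_range_succ _ _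
    rw [hpr]
    ring

lemma prodFk_congr (n : ℕ) (U U' : (m : ℕ) → Fin (n - (m+1)) → ℝ) :
    ∀ N, (∀ m, m ≤ N → U m = U' m) → prodFk n U N = prodFk n U' N := by
  intro N
  induction N with
  | zero => intro h; simp only [prodFk, h 0 (le_refl 0)]
  | succ N ih =>
    intro h
    simp only [prodFk, h (N+1) (le_refl _), ih (fun m hm => h m (by omega))]

noncomputable def gseq (w x : ℕ → ℝ) (k : ℕ) : ℕ → ℝ
  | 0 => w (k - 1) + x 0
  | j + 1 => w (k + j) + x (j + 1) - w (k + j) * x j / gseq w x k j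

lemma gseq_pos (n k : ℕ) (w x : ℕ → ℝ) (hk : 1 ≤ k)
    (hw : ∀ i, i + 1 < n → 0 < w i) (hx : ∀ i, i + k < n → 0 < x i) :
    ∀ j, j + k + 1 ≤ n → 0 < gseq w x k j - x j ∧ 0 < gseq w x k j := by
  intro j
  induction j with
  | zero =>
    intro h
    have h1 : 0 < w (k - 1) := hw _ (by omega)
    have h2 : 0 < x 0 := hx 0 (by omega)
    constructor
    · show 0 < w (k-1) + x 0 - x 0; linarith
    · show 0 < w (k-1) + x 0; linarith
  | succ j ih =>
    intro h
    obtain ⟨ih1, ih2⟩ := ih (by omega)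
    have hwkj : 0 < w (k + j) := hw _ (by omega)
    have hxj1 : 0 < x (j + 1) := hx _ (by omega)
    have hg : gseq w x k (j+1) - x (j+1) = w (k+j) * (gseq w x k j - x j) / gseq w x k j := by
      show w (k + j) + x (j + 1) - w (k + j) * x j / gseq w x k j - x (j+1) = _
      field_simp
      ring
    constructor
    · rw [hg]; positivity
    · have : 0 < gseq w x k (j+1) - x (j+1) := by rw [hg]; positivity
      linarith

lemma LL_apply (n : ℕ) (f g : ℕ → ℝ) (r c : Fin n) :
    (Lmat n f * Lmat n g) r c =
      if (r : ℕ) = (c : ℕ) then 1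
      else if (r : ℕ) = (c : ℕ) + 1 then f (c : ℕ) + g (c : ℕ)
      else if (r : ℕ) = (c : ℕ) + 2 then f ((c : ℕ) + 1) * g (c : ℕ)
      else 0 := by
  rcases Nat.eq_zero_or_pos (r : ℕ) with h0 | h0
  · rw [Lmul_zero n _ _ r c h0, Lmat_apply]
    split_ifs with h1 h2 h3 <;> first | rfl | omega
  · have hs : ((r : ℕ) - 1) < n := by omega
    have hrs : (r : ℕ) = ((⟨(r : ℕ) - 1, hs⟩ : Fin n) : ℕ) + 1 := by
      simp only [Fin.val_mk]; omega
    rw [Lmul_succ n _ _ r ⟨(r : ℕ) - 1, hs⟩ c hrs, Lmat_apply, Lmat_apply]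
    simp only [Fin.val_mk]
    by_cases h1 : (r : ℕ) = (c : ℕ)
    · rw [if_neg (by omega), if_neg (by omega), if_pos h1, if_pos h1]
      ring
    · by_cases h2 : (r : ℕ) = (c : ℕ) + 1
      · rw [if_pos (by omega), if_neg h1, if_pos h2, if_neg h1, if_pos h2]
        have : (r : ℕ) - 1 = (c : ℕ) := by omega
        rw [this]; ring
      · by_cases h3 : (r : ℕ) = (c : ℕ) + 2
        · rw [if_neg (by omega), if_pos (by omega), if_neg h1, if_neg h2,
            if_neg h1, if_neg h2, if_pos h3]
          have : (r : ℕ) - 1 = (c : ℕ) + 1 := by omega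
          rw [this]; ring
        · rw [if_neg (by omega), if_neg (by omega), if_neg h1, if_neg h2,
            if_neg h1, if_neg h2, if_neg h3]
          ring

lemma commute_lemma (n k : ℕ) (hk : 1 ≤ k) (hkn : k + 1 ≤ n)
    (W : Fin (n-1) → ℝ) (X : Fin (n-k) → ℝ)
    (hW : ∀ i, 0 < W i) (hX : ∀ i, 0 < X i) :
    ∃ (W' : Fin (n-1) → ℝ) (X' : Fin (n-(k+1)) → ℝ),
      (∀ i, 0 < W' i) ∧ (∀ i, 0 < X' i) ∧
      Fkmatrix n 1 W * Fkmatrix n k X = Fkmatrix n (k+1) X' * Fkmatrix n 1 W' := by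
  set w : ℕ → ℝ := padded W with hwdef
  set x : ℕ → ℝ := padded X with hxdef
  have hw : ∀ i, i + 1 < n → 0 < w i := by
    intro i hi
    rw [hwdef, padded_lt W i (by omega)]
    exact hW _
  have hx : ∀ i, i + k < n → 0 < x i := by
    intro i hi
    rw [hxdef, padded_lt X i (by omega)]
    exact hX _
  have hg := gseq_pos n k w x hk hw hx
  set G : ℕ → ℝ := gseq w x k with hGdef
  have hGpos : ∀ j, j + k + 1 ≤ n → 0 < G j := fun j hj => (hg j hj).2
  refine ⟨fun c => if (c : ℕ) + 1 < k then W c else G ((c : ℕ) + 1 - k),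
          fun j => w (k + (j : ℕ)) * x (j : ℕ) / G (j : ℕ), ?_, ?_, ?_⟩
  · intro i
    show 0 < if (i : ℕ) + 1 < k then W i else G ((i : ℕ) + 1 - k)
    by_cases hik : (i : ℕ) + 1 < k
    · rw [if_pos hik]; exact hW i
    · rw [if_neg hik]
      exact hGpos _ (by have := i.isLt; omega)
  · intro j
    show 0 < w (k + (j : ℕ)) * x (j : ℕ) / G (j : ℕ)
    have hj := j.isLt
    have h1 : 0 < w (k + (j : ℕ)) := hw _ (by omega)
    have h2 : 0 < x (j : ℕ) := hx _ (by omega)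
    have h3 : 0 < G (j : ℕ) := hGpos _ (by omega)
    positivity
  · set W' : Fin (n-1) → ℝ := fun c => if (c : ℕ) + 1 < k then W c else G ((c : ℕ) + 1 - k)
      with hW'def
    set X' : Fin (n-(k+1)) → ℝ := fun j => w (k + (j : ℕ)) * x (j : ℕ) / G (j : ℕ) with hX'def
    have hw' : ∀ t, t + 1 < n → padded W' t =
        if t + 1 < k then w t else G (t + 1 - k) := by
      intro t ht
      rw [padded_lt W' t (by omega)]
      show (if t + 1 < k then W ⟨t, _⟩ else G (t + 1 - k)) = _
      split_ifs with h
      · rw [hwdef, padded_lt W t (by omega)]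
      · rfl
    have hx' : ∀ t, t + k + 1 < n → padded X' t = w (k + t) * x t / G t := by
      intro t ht
      rw [padded_lt X' t (by omega)]
    have band1 : ∀ c : ℕ, c + 1 < n →
        fket 1 w c + fket k x c = fket (k+1) (padded X') c + fket 1 (padded W') c := by
      intro c hc
      simp only [fket, Nat.add_sub_cancel]
      have hA : (1:ℕ) ≤ c + 1 := by omega
      simp only [if_pos hA]
      rw [hw' c hc]
      by_cases hB : k ≤ c + 1
      · by_cases hC : k + 1 ≤ c + 1
        · rw [if_pos hB, if_pos hC, if_neg (show ¬(c + 1 < k) by omega)]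
          rw [hx' (c + 1 - (k + 1)) (by omega)]
          have e1 : c + 1 - (k + 1) = c - k := by omega
          have hj : c + 1 - k = (c - k) + 1 := by omega
          have hGj : G ((c - k) + 1) = w (k + (c - k)) + x ((c - k) + 1)
              - w (k + (c - k)) * x (c - k) / G (c - k) := rfl
          have e2 : k + (c - k) = c := by omega
          rw [e1, hj, hGj, e2]
          ring
        · rw [if_pos hB, if_neg hC, if_neg (show ¬(c + 1 < k) by omega)]
          have h0 : c + 1 - k = 0 := by omega
          have hG0 : G 0 = w (k - 1) + x 0 := rfl
          rw [h0, hG0, show k - 1 = c by omega]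
          ring
      · rw [if_neg hB, if_neg (show ¬(k + 1 ≤ c + 1) by omega),
          if_pos (show c + 1 < k by omega)]
        ring
    have band2 : ∀ c : ℕ, c + 2 < n →
        fket 1 w (c + 1) * fket k x c = fket (k+1) (padded X') (c + 1) * fket 1 (padded W') c := by
      intro c hc
      simp only [fket, Nat.add_sub_cancel]
      have hA : (1:ℕ) ≤ c + 1 := by omega
      have hA2 : (1:ℕ) ≤ c + 1 + 1 := by omega
      simp only [if_pos hA, if_pos hA2]
      rw [hw' c (by omega)]
      by_cases hB : k ≤ c + 1
      · rw [if_pos hB, if_pos (show k + 1 ≤ c + 1 + 1 by omega),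
          if_neg (show ¬(c + 1 < k) by omega)]
        rw [hx' (c + 1 + 1 - (k + 1)) (by omega)]
        have e1 : c + 1 + 1 - (k + 1) = c + 1 - k := by omega
        have e2 : k + (c + 1 - k) = c + 1 := by omega
        rw [e1, e2]
        have hGne : G (c + 1 - k) ≠ 0 := by
          have := hGpos (c + 1 - k) (by omega)
          linarith
        field_simp
      · rw [if_neg hB, if_neg (show ¬(k + 1 ≤ c + 1 + 1) by omega)]
        ring
    rw [Fk_eq, Fk_eq, Fk_eq, Fk_eq]
    ext r c
    rw [LL_apply, LL_apply]
    have hc := c.isLt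
    have hr := r.isLt
    by_cases h1 : (r : ℕ) = (c : ℕ)
    · rw [if_pos h1, if_pos h1]
    · rw [if_neg h1, if_neg h1]
      by_cases h2 : (r : ℕ) = (c : ℕ) + 1
      · rw [if_pos h2, if_pos h2]
        exact band1 (c : ℕ) (by omega)
      · rw [if_neg h2, if_neg h2]
        by_cases h3 : (r : ℕ) = (c : ℕ) + 2
        · rw [if_pos h3, if_pos h3]
          exact band2 (c : ℕ) (by omega)
        · rw [if_neg h3, if_neg h3]

lemma push_lemma (n : ℕ) : ∀ M, M + 2 ≤ n → ∀ (W : Fin (n-1) → ℝ), (∀ i, 0 < W i) →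
    ∀ U : (m : ℕ) → Fin (n - (m+1)) → ℝ, (∀ m, m ≤ M → ∀ i, 0 < U m i) →
    ∃ U' : (m : ℕ) → Fin (n - (m+1)) → ℝ, (∀ m, m ≤ M + 1 → ∀ i, 0 < U' m i) ∧
      prodFk n U' (M+1) = Fkmatrix n 1 W * prodFk n U M := by
  intro M
  induction M with
  | zero =>
    intro hM W hW U hU
    obtain ⟨W', X', hW', hX', heq⟩ :=
      commute_lemma n 1 le_rfl hM W (U 0) hW (hU 0 le_rfl)
    refine ⟨fun m i => if m = 0 then padded W' i.1 else if m = 1 then padded X' i.1 else 0,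
      ?_, ?_⟩
    · intro m hm i
      interval_cases m
      · simp only [if_pos rfl]
        rw [padded_lt W' i.1 i.isLt]
        exact hW' _
      · simp only [if_neg one_ne_zero, if_pos rfl]
        rw [padded_lt X' i.1 i.isLt]
        exact hX' _
    · have e0 : (fun m i => if m = 0 then padded W' i.1 else if m = 1 then padded X' i.1
          else 0) 0 = W' := by
        funext i
        simp only [↓reduceIte]
        rw [padded_lt W' i.1 i.isLt]
      have e1 : (fun m i => if m = 0 then padded W' i.1 else if m = 1 then padded X' i.1
          else 0) (0+1) = X' := by
        funext i
        show (if (0:ℕ)+1 = 0 then padded W' i.1 else if (0:ℕ)+1 = 1 then padded X' i.1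
          else 0) = X' i
        rw [if_neg (Nat.succ_ne_zero 0), if_pos rfl, padded_lt X' i.1 i.isLt]
      have h1 : prodFk n (fun m i => if m = 0 then padded W' i.1 else if m = 1 then padded X' i.1
          else 0) (0+1) = Fkmatrix n (0+2) ((fun m i => if m = 0 then padded W' i.1
          else if m = 1 then padded X' i.1 else 0) (0+1)) *
          Fkmatrix n 1 ((fun m i => if m = 0 then padded W' i.1
          else if m = 1 then padded X' i.1 else 0) 0) := rfl
      have h0 : prodFk n U 0 = Fkmatrix n 1 (U 0) := rfl
      rw [h1, e0, e1, h0, heq]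
  | succ M ih =>
    intro hM W hW U hU
    obtain ⟨W'', X', hW'', hX', heq⟩ :=
      commute_lemma n (M+2) (by omega) (by omega) W (U (M+1)) hW (hU (M+1) le_rfl)
    obtain ⟨U'', hU''pos, hU''⟩ := ih (by omega) W'' hW'' U (fun m hm => hU m (by omega))
    refine ⟨fun m i => if m = M+2 then padded X' i.1 else U'' m i, ?_, ?_⟩
    · intro m hm i
      by_cases hm2 : m = M + 2
      · subst hm2
        show 0 < if M+2 = M+2 then padded X' i.1 else U'' (M+2) i
        rw [if_pos rfl, padded_lt X' i.1 (by have := i.isLt; omega)]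
        exact hX' _
      · show 0 < if m = M+2 then padded X' i.1 else U'' m i
        rw [if_neg hm2]
        exact hU''pos m (by omega) i
    · have eFk : Fkmatrix n (M+1+2)
          ((fun m i => if m = M+2 then padded X' i.1 else U'' m i) (M+1+1))
          = Fkmatrix n (M+2+1) X' := by
        ext r c
        simp only [Fkmatrix, Matrix.of_apply]
        by_cases h1 : (r : ℕ) = (c : ℕ)
        · rw [if_pos h1, if_pos h1]
        · rw [if_neg h1, if_neg h1]
          by_cases h2 : (r : ℕ) = (c : ℕ) + 1 ∧ M+1+2 ≤ (c : ℕ) + 1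
          · rw [if_pos h2, if_pos ⟨h2.1, by omega⟩]
            by_cases hcr : (c : ℕ) + 1 - (M+2+1) < n - (M+2+1)
            · rw [padded_lt _ _ (show (c : ℕ)+1-(M+1+2) < n-(M+1+1+1) by omega),
                padded_lt X' _ hcr]
              beta_reduce
              simp
            · rw [padded_ge _ _ (show ¬((c : ℕ)+1-(M+1+2) < n-(M+1+1+1)) by omega),
                padded_ge X' _ hcr]
          · rw [if_neg h2, if_neg (fun hh => h2 ⟨hh.1, by omega⟩)]
      have ec : prodFk n (fun m i => if m = M+2 then padded X' i.1 else U'' m i) (M+1)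
          = prodFk n U'' (M+1) :=
        prodFk_congr n _ U'' (M+1) (fun m hm => by
          funext i
          simp only [if_neg (show m ≠ M+2 by omega)])
      have h1 : prodFk n (fun m i => if m = M+2 then padded X' i.1 else U'' m i) (M+1+1) =
          Fkmatrix n (M+1+2) ((fun m i => if m = M+2 then padded X' i.1 else U'' m i) (M+1+1)) *
          prodFk n (fun m i => if m = M+2 then padded X' i.1 else U'' m i) (M+1) := rfl
      have h2 : prodFk n U (M+1) = Fkmatrix n (M+2) (U (M+1)) * prodFk n U M := rfl
      rw [h1, eFk, ec, hU'', h2, ← mul_assoc, ← mul_assoc, heq]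

lemma exists_fact (n : ℕ) (V : ℕ → Fin (n-1) → ℝ) :
    ∀ N, N + 1 ≤ n → (∀ j, j ≤ N → ∀ i, 0 < V j i) →
    ∃ U : (m : ℕ) → Fin (n - (m+1)) → ℝ,
      (∀ m, m ≤ N → ∀ i, 0 < U m i) ∧ prodF1 n V N = prodFk n U N := by
  intro N
  induction N with
  | zero =>
    intro _ hV
    refine ⟨fun m i => if m = 0 then padded (V 0) i.1 else 0, ?_, ?_⟩
    · intro m hm i
      interval_cases m
      show 0 < if (0:ℕ) = 0 then padded (V 0) i.1 else 0
      rw [if_pos rfl, padded_lt (V 0) i.1 i.isLt]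
      exact hV 0 le_rfl _
    · have e0 : (fun m i => if m = 0 then padded (V 0) i.1 else 0) 0 = V 0 := by
        funext i
        show (if (0:ℕ) = 0 then padded (V 0) i.1 else 0) = V 0 i
        rw [if_pos rfl, padded_lt (V 0) i.1 i.isLt]
      have h1 : prodF1 n V 0 = Fkmatrix n 1 (V 0) := rfl
      have h2 : prodFk n (fun m i => if m = 0 then padded (V 0) i.1 else 0) 0 =
          Fkmatrix n 1 ((fun m i => if m = 0 then padded (V 0) i.1 else 0) 0) := rfl
      rw [h1, h2, e0]
  | succ N ih =>
    intro hN hV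
    obtain ⟨U, hUpos, hU⟩ := ih (by omega) (fun j hj => hV j (by omega))
    obtain ⟨U', hU'pos, hU'⟩ :=
      push_lemma n N (by omega) (V (N+1)) (hV (N+1) le_rfl) U hUpos
    refine ⟨U', hU'pos, ?_⟩
    have h1 : prodF1 n V (N+1) = Fkmatrix n 1 (V (N+1)) * prodF1 n V N := rfl
    rw [h1, hU, ← hU']

lemma uniq_fact (n : ℕ) : ∀ N (U U' : (m : ℕ) → Fin (n - (m+1)) → ℝ),
    (∀ m, m ≤ N → ∀ i, 0 < U m i) → prodFk n U' N = prodFk n U N →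
    ∀ m, m ≤ N → U' m = U m := by
  intro N
  induction N with
  | zero =>
    intro U U' hU h m hm
    interval_cases m
    funext i
    have hr : (i : ℕ) + 1 < n := by have := i.isLt; omega
    have hc : (i : ℕ) < n := by omega
    have he : prodFk n U' 0 ⟨(i:ℕ)+1, hr⟩ ⟨(i:ℕ), hc⟩
        = prodFk n U 0 ⟨(i:ℕ)+1, hr⟩ ⟨(i:ℕ), hc⟩ := by rw [h]
    have h1 : prodFk n U' 0 = Fkmatrix n 1 (U' 0) := rfl
    have h2 : prodFk n U 0 = Fkmatrix n 1 (U 0) := rfl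
    rw [h1, h2] at he
    simp only [Fkmatrix, Matrix.of_apply, Fin.val_mk] at he
    simp only [if_neg (show ¬((i:ℕ)+1 = (i:ℕ)) by omega),
      if_pos (show (i:ℕ)+1 = (i:ℕ)+1 ∧ 1 ≤ (i:ℕ)+1 by omega)] at he
    have hi : (i : ℕ) + 1 - 1 = (i : ℕ) := by omega
    rw [hi, padded_lt (U' 0) (i : ℕ) i.isLt, padded_lt (U 0) (i : ℕ) i.isLt] at he
    simpa using he
  | succ N ih =>
    intro U U' hU h
    have h' : ∀ r c : Fin n,
        (Lmat n (fket (N+2) (padded (U' (N+1)))) * prodFk n U' N) r c =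
        (Lmat n (fket (N+2) (padded (U (N+1)))) * prodFk n U N) r c := by
      intro r c
      rw [← prodFk_succ_L, ← prodFk_succ_L, h]
    -- master claim: column equality and band-value equality, by strong induction on column
    have key : ∀ c : ℕ,
        (∀ rv (hr : rv < n) (hc : c < n),
          prodFk n U' N ⟨rv, hr⟩ ⟨c, hc⟩ = prodFk n U N ⟨rv, hr⟩ ⟨c, hc⟩) ∧
        padded (U' (N+1)) c = padded (U (N+1)) c := by
      intro c
      induction c using Nat.strong_induction_on with
      | _ c ihc =>
      have hcol : ∀ rv (hr : rv < n) (hc : c < n),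
          prodFk n U' N ⟨rv, hr⟩ ⟨c, hc⟩ = prodFk n U N ⟨rv, hr⟩ ⟨c, hc⟩ := by
        intro rv
        induction rv using Nat.strong_induction_on with
        | _ rv ihr =>
        intro hr hc
        by_cases hband : c + N + 1 < rv
        · rw [prodFk_gt n U' N _ _ (by simpa using hband),
            prodFk_gt n U N _ _ (by simpa using hband)]
        · rcases Nat.eq_zero_or_pos rv with h0 | h0
          · have e := h' ⟨rv, hr⟩ ⟨c, hc⟩
            rwa [Lmul_zero n _ _ _ _ (by simpa using h0),
              Lmul_zero n _ _ _ _ (by simpa using h0)] at e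
          · have hs : rv - 1 < n := by omega
            have e := h' ⟨rv, hr⟩ ⟨c, hc⟩
            rw [Lmul_succ n _ (prodFk n U' N) ⟨rv, hr⟩ ⟨rv - 1, hs⟩ ⟨c, hc⟩ (by simp; omega),
              Lmul_succ n _ (prodFk n U N) ⟨rv, hr⟩ ⟨rv - 1, hs⟩ ⟨c, hc⟩ (by simp; omega)] at e
            have hQs : prodFk n U' N ⟨rv - 1, hs⟩ ⟨c, hc⟩
                = prodFk n U N ⟨rv - 1, hs⟩ ⟨c, hc⟩ := ihr (rv - 1) (by omega) hs hc
            by_cases hN2 : N + 2 ≤ (rv - 1) + 1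
            · have hfeq : fket (N+2) (padded (U' (N+1)))
                  ((⟨rv - 1, hs⟩ : Fin n) : ℕ) =
                  fket (N+2) (padded (U (N+1))) ((⟨rv - 1, hs⟩ : Fin n) : ℕ) := by
                simp only [fket, Fin.val_mk, if_pos hN2]
                rw [(ihc ((rv - 1) + 1 - (N+2)) (by omega)).2]
              rw [hfeq, hQs] at e
              linarith
            · have hz : fket (N+2) (padded (U' (N+1)))
                  ((⟨rv - 1, hs⟩ : Fin n) : ℕ) = 0 := by
                simp only [fket, Fin.val_mk, if_neg hN2]
              have hz2 : fket (N+2) (padded (U (N+1)))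
                  ((⟨rv - 1, hs⟩ : Fin n) : ℕ) = 0 := by
                simp only [fket, Fin.val_mk, if_neg hN2]
              rw [hz, hz2, hQs] at e
              linarith
      refine ⟨hcol, ?_⟩
      by_cases hcn : c < n - (N+2)
      · have hc : c < n := by omega
        have hr2 : c + N + 2 < n := by omega
        have hs : c + N + 1 < n := by omega
        have e := h' ⟨c + N + 2, hr2⟩ ⟨c, hc⟩
        rw [Lmul_succ n _ (prodFk n U' N) ⟨c + N + 2, hr2⟩ ⟨c + N + 1, hs⟩ ⟨c, hc⟩ (by simp),
          Lmul_succ n _ (prodFk n U N) ⟨c + N + 2, hr2⟩ ⟨c + N + 1, hs⟩ ⟨c, hc⟩ (by simp)] at e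
        rw [prodFk_gt n U' N ⟨c + N + 2, hr2⟩ ⟨c, hc⟩ (by simp),
          prodFk_gt n U N ⟨c + N + 2, hr2⟩ ⟨c, hc⟩ (by simp)] at e
        have hQ'col : prodFk n U' N ⟨c + N + 1, hs⟩ ⟨c, hc⟩
            = prodFk n U N ⟨c + N + 1, hs⟩ ⟨c, hc⟩ := hcol (c + N + 1) hs hc
        have hQband : prodFk n U N ⟨c + N + 1, hs⟩ ⟨c, hc⟩
            = (-1:ℝ)^(N+1) * ∏ m ∈ Finset.range (N+1), padded (U m) c :=
          prodFk_band n U N _ _ (by simp)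
        have hBne : prodFk n U N ⟨c + N + 1, hs⟩ ⟨c, hc⟩ ≠ 0 := by
          rw [hQband]
          have hp : 0 < ∏ m ∈ Finset.range (N+1), padded (U m) c := by
            apply Finset.prod_pos
            intro m hm
            have hm' : m < N + 1 := Finset.mem_range.1 hm
            rw [padded_lt (U m) c (by omega)]
            exact hU m (by omega) _
          exact mul_ne_zero (pow_ne_zero _ (by norm_num)) (ne_of_gt hp)
        rw [hQ'col] at e
        have e2 : fket (N+2) (padded (U' (N+1))) ((⟨c + N + 1, hs⟩ : Fin n) : ℕ)
            = fket (N+2) (padded (U (N+1))) ((⟨c + N + 1, hs⟩ : Fin n) : ℕ) :=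
          mul_right_cancel₀ hBne (by linarith)
        simp only [fket, Fin.val_mk, if_pos (show N + 2 ≤ c + N + 1 + 1 by omega)] at e2
        have hidx : c + N + 1 + 1 - (N + 2) = c := by omega
        rw [hidx] at e2
        exact neg_injective e2
      · rw [padded_ge (U' (N+1)) c (by omega), padded_ge (U (N+1)) c (by omega)]
    intro m hm
    by_cases hmN : m = N + 1
    · subst hmN
      funext i
      have := (key i.1).2
      rwa [padded_lt (U' (N+1)) i.1 i.isLt, padded_lt (U (N+1)) i.1 i.isLt] at this
    · have hQQ : prodFk n U' N = prodFk n U N := by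
        ext r c
        exact (key c.1).1 r.1 r.isLt c.isLt
      exact ih U U' (fun m' hm' => hU m' (by omega)) hQQ m (by omega)

/- STATEMENT 9: for positive vectors V_0,…,V_N of length n−1 (N ≤ n−1), there
exist unique vectors U_m (1 ≤ m ≤ N+1, U_m of length n−m; here `U m` encodes
U_{m+1} for 0 ≤ m ≤ N) with F(V_N)⋯F(V_0) = F_{N+1}(U_{N+1})⋯F_1(U_1), and all
their entries are positive. -/
theorem exists_unique_F_factorization (n N : ℕ) (hn : 1 ≤ n) (hN : N ≤ n - 1)
    (V : ℕ → Fin (n - 1) → ℝ) (hV : ∀ j, j ≤ N → ∀ i, 0 < V j i) :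
    ∃ U : (m : ℕ) → Fin (n - (m+1)) → ℝ,
      prodF1 n V N = prodFk n U N ∧
      (∀ m, m ≤ N → ∀ i, 0 < U m i) ∧
      ∀ U' : (m : ℕ) → Fin (n - (m+1)) → ℝ,
        prodF1 n V N = prodFk n U' N → ∀ m, m ≤ N → U' m = U m := by
  obtain ⟨U, hUpos, hU⟩ := exists_fact n V N (by omega) hV
  exact ⟨U, hU, hUpos, fun U' hU' m hm =>
    uniq_fact n N U U' hUpos (hU'.symm.trans hU) m hm⟩
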